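/- (Unsquared form of the main theorem.) Let A, E ∈ ℝ^{m×n}, Ã := A + E with every row ã_i nonzero, let x_LS ∈ ℝ^n, b := A x_LS, ε ∈ ℝ^m, b̃ := b + ε, p_i := ‖ã_i‖²/‖Ã‖_F², and K_i(x) := x − ((⟨ã_i, x⟩ − b̃_i)/‖ã_i‖²) ã_i. Let σ > 0 satisfy ‖Ã z‖ ≥ σ‖z‖ for every z ∈ range(Ãᵀ), and let x_0 − x_LS ∈ range(Ãᵀ). Then for every k ≥ 0, Σ_{(i_1,…,i_k) ∈ {1,…,m}^k} p_{i_1}⋯p_{i_k} ‖K_{i_k}(⋯K_{i_1}(x_0)⋯) − x_LS‖ ≤ (1 − σ²/‖Ã‖_F²)^{k/2} ‖x_0 − x_LS‖ + ‖E x_LS − ε‖/σ. -/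

import Mathlib

open Matrix
open scoped RealInnerProductSpace

/-- The `i`-th row of a matrix, viewed as a vector in Euclidean space. -/
noncomputable def row {m n : ℕ} (M : Matrix (Fin m) (Fin n) ℝ) (i : Fin m) :
    EuclideanSpace ℝ (Fin n) :=
  (WithLp.equiv 2 (Fin n → ℝ)).symm (M i)

/-- Matrix-vector multiplication as a map between Euclidean spaces. -/
noncomputable def mulVecE {m n : ℕ} (M : Matrix (Fin m) (Fin n) ℝ)
    (x : EuclideanSpace ℝ (Fin n)) : EuclideanSpace ℝ (Fin m) :=
  Matrix.toEuclideanLin M x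

/-- The Kaczmarz update of `x` for the system `M y = c`, using row `i`:
`x ↦ x - ((⟨mᵢ, x⟩ - cᵢ)/‖mᵢ‖²) mᵢ`. -/
noncomputable def kaczmarz {m n : ℕ} (M : Matrix (Fin m) (Fin n) ℝ) (c : Fin m → ℝ) (i : Fin m)
    (x : EuclideanSpace ℝ (Fin n)) : EuclideanSpace ℝ (Fin n) :=
  x - ((⟪_root_.row M i, x⟫ - c i) / ‖_root_.row M i‖ ^ 2) • _root_.row M i

/-- Iterated Kaczmarz updates along the index sequence `is = (i₁, …, i_k)`,
applying row `i₁` first: `K_{i_k}(⋯ K_{i₁}(x₀) ⋯)`. -/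
noncomputable def kaczmarzIter {m n k : ℕ} (M : Matrix (Fin m) (Fin n) ℝ) (c : Fin m → ℝ)
    (is : Fin k → Fin m) (x0 : EuclideanSpace ℝ (Fin n)) : EuclideanSpace ℝ (Fin n) :=
  (List.ofFn is).foldl (fun x i => kaczmarz M c i x) x0

/-- The squared Frobenius norm `‖M‖_F² = Σ_{i,j} M_{ij}²`. -/
noncomputable def frobSq {m n : ℕ} (M : Matrix (Fin m) (Fin n) ℝ) : ℝ :=
  ∑ i, ∑ j, (M i j) ^ 2

/-- The row space `range(Mᵀ)` of a matrix, as a submodule of Euclidean space. -/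
noncomputable def rowSpace {m n : ℕ} (M : Matrix (Fin m) (Fin n) ℝ) :
    Submodule ℝ (EuclideanSpace ℝ (Fin n)) :=
  LinearMap.range (Matrix.toEuclideanLin Mᵀ)

/-- The spectral norm (operator 2-norm) of a matrix. -/
noncomputable def specNorm {m n : ℕ} (M : Matrix (Fin m) (Fin n) ℝ) : ℝ :=
  ‖LinearMap.toContinuousLinearMap (Matrix.toEuclideanLin M)‖

/-!
The residual `r := Ã x_LS - b̃ = E x_LS - ε` measures how far `x_LS` is from solving the noisy
system. For a nonzero row `a = ãᵢ` the Kaczmarz step satisfies the exact identity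
`‖Kᵢ x - x_LS‖² = ‖x - x_LS‖² - (⟨a, x - x_LS⟩² - rᵢ²) / ‖a‖²`, so averaging with the weights
`pᵢ = ‖ãᵢ‖² / ‖Ã‖_F²` gives
`E‖K x - x_LS‖² ≤ ‖x - x_LS‖² - (‖Ã (x - x_LS)‖² - ‖r‖²) / ‖Ã‖_F²
  ≤ α ‖x - x_LS‖² + ‖r‖² / ‖Ã‖_F²`, `α = 1 - σ² / ‖Ã‖_F²`,
because `x - x_LS` stays in the row space, where `‖Ã z‖ ≥ σ ‖z‖`. Iterating this drift inequality
and summing the geometric series bounds the expected squared error by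
`αᵏ ‖x₀ - x_LS‖² + ‖r‖² / σ²`; Jensen's inequality and `√(a² + b²) ≤ a + b` then give the bound.
-/

section RandomComposition

variable {ι X : Type*} [Fintype ι]

lemma sum_prod_eq_one_of_sum_eq_one {p : ι → ℝ} (hp : ∑ i, p i = 1) (k : ℕ) :
    ∑ is : Fin k → ι, ∏ j, p (is j) = 1 := by
  classical
  rw [← Fintype.prod_sum]
  simp [hp]

lemma sum_fin_succ_pi {M : Type*} [AddCommMonoid M] (k : ℕ) (f : (Fin (k + 1) → ι) → M) :
    ∑ is, f is = ∑ i, ∑ is : Fin k → ι, f (Fin.cons i is) := by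
  rw [← (Fin.consEquiv fun _ => ι).sum_comp, Fintype.sum_prod_type]
  rfl

theorem sum_prod_mul_foldl_le {p : ι → ℝ} (hp : ∀ i, 0 ≤ p i) (hp1 : ∑ i, p i = 1)
    {K : ι → X → X} {S : Set X} (hKS : ∀ i, Set.MapsTo (K i) S S) {V : X → ℝ} {α β : ℝ}
    (hα : 0 ≤ α) (hV : ∀ x ∈ S, ∑ i, p i * V (K i x) ≤ α * V x + β) (k : ℕ) {x : X}
    (hx : x ∈ S) :
    ∑ is : Fin k → ι, (∏ j, p (is j)) * V ((List.ofFn is).foldl (fun x i => K i x) x)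
      ≤ α ^ k * V x + β * ∑ j ∈ Finset.range k, α ^ j := by
  induction k generalizing x with
  | zero => simp
  | succ k ih =>
    set G := ∑ j ∈ Finset.range k, α ^ j
    calc ∑ is : Fin (k + 1) → ι, (∏ j, p (is j)) * V ((List.ofFn is).foldl (fun x i => K i x) x)
        = ∑ i, p i * ∑ is : Fin k → ι,
            (∏ j, p (is j)) * V ((List.ofFn is).foldl (fun x i => K i x) (K i x)) := by
          simp only [sum_fin_succ_pi, Finset.mul_sum, Fin.prod_univ_succ, Fin.cons_zero,
            Fin.cons_succ, List.ofFn_succ, List.foldl_cons, mul_assoc]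
      _ ≤ ∑ i, p i * (α ^ k * V (K i x) + β * G) :=
          Finset.sum_le_sum fun i _ => mul_le_mul_of_nonneg_left (ih (hKS i hx)) (hp i)
      _ = α ^ k * ∑ i, p i * V (K i x) + β * G := by
          have split : ∀ i, p i * (α ^ k * V (K i x) + β * G)
              = α ^ k * (p i * V (K i x)) + p i * (β * G) := fun i => by ring
          rw [Finset.sum_congr rfl fun i _ => split i, Finset.sum_add_distrib, ← Finset.mul_sum,
            ← Finset.sum_mul, hp1, one_mul]
      _ ≤ α ^ k * (α * V x + β) + β * G := by gcongr; exact hV x hx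
      _ = α ^ (k + 1) * V x + β * ∑ j ∈ Finset.range (k + 1), α ^ j := by
          rw [Finset.sum_range_succ, pow_succ]; ring

end RandomComposition

lemma sum_mul_le_add_of_sum_mul_sq_le {ι : Type*} {s : Finset ι} {w f : ι → ℝ}
    (hw : ∀ i ∈ s, 0 ≤ w i) (hw1 : ∑ i ∈ s, w i = 1) {a b : ℝ} (ha : 0 ≤ a) (hb : 0 ≤ b)
    (h : ∑ i ∈ s, w i * f i ^ 2 ≤ a ^ 2 + b ^ 2) : ∑ i ∈ s, w i * f i ≤ a + b := by
  have jensen : (∑ i ∈ s, w i * f i) ^ 2 ≤ ∑ i ∈ s, w i * f i ^ 2 :=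
    (even_two.convexOn_pow).map_sum_le hw hw1 fun _ _ => Set.mem_univ _
  exact le_of_sq_le_sq (by nlinarith) (by positivity)

lemma norm_sub_div_smul_sub_sq {F : Type*} [NormedAddCommGroup F] [InnerProductSpace ℝ F]
    {a : F} (ha : a ≠ 0) (c : ℝ) (x y : F) :
    ‖x - ((⟪a, x⟫ - c) / ‖a‖ ^ 2) • a - y‖ ^ 2
      = ‖x - y‖ ^ 2 - (⟪a, x - y⟫ ^ 2 - (⟪a, y⟫ - c) ^ 2) / ‖a‖ ^ 2 := by
  have ha' : ‖a‖ ≠ 0 := norm_ne_zero_iff.mpr ha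
  have hxy : ⟪a, x⟫ - c = ⟪a, x - y⟫ + (⟪a, y⟫ - c) := by rw [inner_sub_right]; ring
  rw [sub_right_comm, hxy, norm_sub_sq_real, real_inner_smul_right, real_inner_comm,
    norm_smul, mul_pow, Real.norm_eq_abs, sq_abs]
  field_simp
  ring

section Matrix

variable {m n : ℕ}

lemma inner_row (M : Matrix (Fin m) (Fin n) ℝ) (i : Fin m) (x : EuclideanSpace ℝ (Fin n)) :
    ⟪_root_.row M i, x⟫ = mulVecE M x i := by
  simp [_root_.row, mulVecE, Matrix.toEuclideanLin, EuclideanSpace.inner_eq_star_dotProduct,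
    Matrix.mulVec, dotProduct, mul_comm]

lemma norm_mulVecE_sq (M : Matrix (Fin m) (Fin n) ℝ) (x : EuclideanSpace ℝ (Fin n)) :
    ‖mulVecE M x‖ ^ 2 = ∑ i, ⟪_root_.row M i, x⟫ ^ 2 := by
  simp [EuclideanSpace.real_norm_sq_eq, inner_row]

lemma frobSq_eq_sum_norm_row_sq (M : Matrix (Fin m) (Fin n) ℝ) :
    frobSq M = ∑ i, ‖_root_.row M i‖ ^ 2 := by
  simp [frobSq, EuclideanSpace.real_norm_sq_eq, _root_.row]

lemma frobSq_nonneg (M : Matrix (Fin m) (Fin n) ℝ) : 0 ≤ frobSq M := by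
  unfold frobSq
  positivity

lemma eq_zero_of_frobSq_eq_zero {M : Matrix (Fin m) (Fin n) ℝ} (h : frobSq M = 0) : M = 0 := by
  ext i j
  simp only [frobSq] at h
  rw [Finset.sum_eq_zero_iff_of_nonneg fun i _ => by positivity] at h
  have := (Finset.sum_eq_zero_iff_of_nonneg fun j _ => by positivity).mp (h i (Finset.mem_univ _)) j
  simpa using this

lemma rowSpace_eq_bot_of_frobSq_eq_zero {M : Matrix (Fin m) (Fin n) ℝ} (h : frobSq M = 0) :
    rowSpace M = ⊥ := by
  rw [rowSpace, eq_zero_of_frobSq_eq_zero h, transpose_zero, map_zero, LinearMap.range_zero]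

lemma kaczmarzIter_eq_self_of_frobSq_eq_zero {M : Matrix (Fin m) (Fin n) ℝ} (h : frobSq M = 0)
    (c : Fin m → ℝ) {k : ℕ} (is : Fin k → Fin m) (x : EuclideanSpace ℝ (Fin n)) :
    kaczmarzIter M c is x = x := by
  have hrow : ∀ i, _root_.row M i = 0 := fun i => by rw [eq_zero_of_frobSq_eq_zero h]; rfl
  exact List.foldl_fixed' (fun i => by simp [kaczmarz, hrow]) _

lemma norm_mulVecE_sq_le (M : Matrix (Fin m) (Fin n) ℝ) (x : EuclideanSpace ℝ (Fin n)) :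
    ‖mulVecE M x‖ ^ 2 ≤ frobSq M * ‖x‖ ^ 2 := by
  rw [norm_mulVecE_sq, frobSq_eq_sum_norm_row_sq, Finset.sum_mul]
  gcongr with i
  rw [← mul_pow, sq_le_sq, abs_of_nonneg (by positivity : 0 ≤ ‖_root_.row M i‖ * ‖x‖)]
  exact abs_real_inner_le_norm _ _

lemma row_mem_rowSpace (M : Matrix (Fin m) (Fin n) ℝ) (i : Fin m) :
    _root_.row M i ∈ rowSpace M := by
  refine ⟨WithLp.toLp 2 (Pi.single i 1), ?_⟩
  ext j
  simp [_root_.row, Matrix.toEuclideanLin, Matrix.mulVec_single]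

lemma sq_div_frobSq_le_one {M : Matrix (Fin m) (Fin n) ℝ} (hF : 0 < frobSq M) {σ : ℝ}
    (hσ : 0 ≤ σ) (hσM : ∀ z ∈ rowSpace M, σ * ‖z‖ ≤ ‖mulVecE M z‖) : σ ^ 2 / frobSq M ≤ 1 := by
  rw [div_le_one hF]
  obtain ⟨i, -, hi⟩ : ∃ i ∈ Finset.univ, ‖_root_.row M i‖ ^ 2 ≠ 0 :=
    Finset.exists_ne_zero_of_sum_ne_zero (frobSq_eq_sum_norm_row_sq M ▸ hF.ne')
  have hσa := hσM _ (row_mem_rowSpace M i)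
  have : σ ^ 2 * ‖_root_.row M i‖ ^ 2 ≤ frobSq M * ‖_root_.row M i‖ ^ 2 :=
    calc σ ^ 2 * ‖_root_.row M i‖ ^ 2 = (σ * ‖_root_.row M i‖) ^ 2 := by ring
      _ ≤ ‖mulVecE M (_root_.row M i)‖ ^ 2 := by gcongr
      _ ≤ frobSq M * ‖_root_.row M i‖ ^ 2 := norm_mulVecE_sq_le M _
  exact le_of_mul_le_mul_right this (lt_of_le_of_ne (sq_nonneg _) hi.symm)

lemma sum_norm_row_sq_div_frobSq {M : Matrix (Fin m) (Fin n) ℝ} (hF : frobSq M ≠ 0) :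
    ∑ i, ‖_root_.row M i‖ ^ 2 / frobSq M = 1 := by
  rw [← Finset.sum_div, ← frobSq_eq_sum_norm_row_sq, div_self hF]

lemma kaczmarz_sub_mem_rowSpace {M : Matrix (Fin m) (Fin n) ℝ} (c : Fin m → ℝ) (i : Fin m)
    {x y : EuclideanSpace ℝ (Fin n)} (hx : x - y ∈ rowSpace M) :
    kaczmarz M c i x - y ∈ rowSpace M := by
  rw [kaczmarz, sub_right_comm]
  exact Submodule.sub_mem _ hx (Submodule.smul_mem _ _ (row_mem_rowSpace M i))

lemma norm_row_sq_mul_norm_kaczmarz_sub_sq_le (M : Matrix (Fin m) (Fin n) ℝ) (c : Fin m → ℝ)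
    (i : Fin m) (x y : EuclideanSpace ℝ (Fin n)) :
    ‖_root_.row M i‖ ^ 2 * ‖kaczmarz M c i x - y‖ ^ 2
      ≤ ‖_root_.row M i‖ ^ 2 * ‖x - y‖ ^ 2 - ⟪_root_.row M i, x - y⟫ ^ 2
        + (mulVecE M y i - c i) ^ 2 := by
  -- a zero row turns the update into the identity, hence only an inequality
  by_cases h : _root_.row M i = 0
  · simp only [h, norm_zero, inner_zero_left]
    nlinarith [sq_nonneg (mulVecE M y i - c i)]
  have h' : ‖_root_.row M i‖ ≠ 0 := norm_ne_zero_iff.mpr h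
  rw [kaczmarz, norm_sub_div_smul_sub_sq h, inner_row M i y]
  field_simp
  exact le_of_eq (by ring)

lemma sum_weight_mul_norm_kaczmarz_sub_sq_le {M : Matrix (Fin m) (Fin n) ℝ} (hF : 0 < frobSq M)
    (c : Fin m → ℝ) (x y : EuclideanSpace ℝ (Fin n)) :
    ∑ i, ‖_root_.row M i‖ ^ 2 / frobSq M * ‖kaczmarz M c i x - y‖ ^ 2
      ≤ ‖x - y‖ ^ 2
        - (‖mulVecE M (x - y)‖ ^ 2 - ‖mulVecE M y - WithLp.toLp 2 c‖ ^ 2) / frobSq M := by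
  calc ∑ i, ‖_root_.row M i‖ ^ 2 / frobSq M * ‖kaczmarz M c i x - y‖ ^ 2
      = (∑ i, ‖_root_.row M i‖ ^ 2 * ‖kaczmarz M c i x - y‖ ^ 2) / frobSq M := by
        rw [Finset.sum_div]
        exact Finset.sum_congr rfl fun i _ => by ring
    _ ≤ (∑ i, (‖_root_.row M i‖ ^ 2 * ‖x - y‖ ^ 2 - ⟪_root_.row M i, x - y⟫ ^ 2
          + (mulVecE M y i - c i) ^ 2)) / frobSq M := by
        gcongr with i
        exact norm_row_sq_mul_norm_kaczmarz_sub_sq_le M c i x y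
    _ = _ := by
        rw [Finset.sum_add_distrib, Finset.sum_sub_distrib, ← Finset.sum_mul,
          ← frobSq_eq_sum_norm_row_sq, ← norm_mulVecE_sq, EuclideanSpace.real_norm_sq_eq
            (mulVecE M y - WithLp.toLp 2 c)]
        field_simp
        simp only [PiLp.sub_apply]
        ring

lemma sum_weight_mul_norm_kaczmarz_sub_sq_le_of_mem {M : Matrix (Fin m) (Fin n) ℝ}
    (hF : 0 < frobSq M) {σ : ℝ} (hσ : 0 ≤ σ) (hσM : ∀ z ∈ rowSpace M, σ * ‖z‖ ≤ ‖mulVecE M z‖)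
    (c : Fin m → ℝ) {x y : EuclideanSpace ℝ (Fin n)} (hx : x - y ∈ rowSpace M) :
    ∑ i, ‖_root_.row M i‖ ^ 2 / frobSq M * ‖kaczmarz M c i x - y‖ ^ 2
      ≤ (1 - σ ^ 2 / frobSq M) * ‖x - y‖ ^ 2
        + ‖mulVecE M y - WithLp.toLp 2 c‖ ^ 2 / frobSq M := by
  have hσxy : σ ^ 2 * ‖x - y‖ ^ 2 ≤ ‖mulVecE M (x - y)‖ ^ 2 := by
    rw [← mul_pow]
    gcongr
    exact hσM _ hx
  calc _ ≤ _ := sum_weight_mul_norm_kaczmarz_sub_sq_le hF c x y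
    _ ≤ ‖x - y‖ ^ 2
          - (σ ^ 2 * ‖x - y‖ ^ 2 - ‖mulVecE M y - WithLp.toLp 2 c‖ ^ 2) / frobSq M := by
        gcongr
    _ = _ := by ring

theorem sum_prod_weight_mul_norm_kaczmarzIter_sub_sq_le {M : Matrix (Fin m) (Fin n) ℝ}
    (hF : 0 < frobSq M) {σ : ℝ} (hσ : 0 < σ)
    (hσM : ∀ z ∈ rowSpace M, σ * ‖z‖ ≤ ‖mulVecE M z‖) (c : Fin m → ℝ)
    {x0 y : EuclideanSpace ℝ (Fin n)} (hx0 : x0 - y ∈ rowSpace M) (k : ℕ) :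
    ∑ is : Fin k → Fin m,
        (∏ j, ‖_root_.row M (is j)‖ ^ 2 / frobSq M) * ‖kaczmarzIter M c is x0 - y‖ ^ 2
      ≤ (1 - σ ^ 2 / frobSq M) ^ k * ‖x0 - y‖ ^ 2
        + ‖mulVecE M y - WithLp.toLp 2 c‖ ^ 2 / σ ^ 2 := by
  set α := 1 - σ ^ 2 / frobSq M with hα
  set R := ‖mulVecE M y - WithLp.toLp 2 c‖
  have hα0 : 0 ≤ α := sub_nonneg.mpr (sq_div_frobSq_le_one hF hσ.le hσM)
  have hα1 : α < 1 := sub_lt_self _ (by positivity)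
  have drift := sum_prod_mul_foldl_le (fun i => by positivity) (sum_norm_row_sq_div_frobSq hF.ne')
    (S := {x | x - y ∈ rowSpace M}) (V := fun x => ‖x - y‖ ^ 2)
    (fun i _ hx => kaczmarz_sub_mem_rowSpace c i hx) hα0
    (fun _ hx => sum_weight_mul_norm_kaczmarz_sub_sq_le_of_mem hF hσ.le hσM c hx) k hx0
  have geom : R ^ 2 / frobSq M * ∑ j ∈ Finset.range k, α ^ j ≤ R ^ 2 / σ ^ 2 :=
    calc _ ≤ R ^ 2 / frobSq M * (1 / (1 - α)) := by
          gcongr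
          simpa using geom_sum_Ico_le_of_lt_one (m := 0) (n := k) hα0 hα1
      _ = R ^ 2 / σ ^ 2 := by
          rw [hα]
          field_simp
          ring
  exact drift.trans (by linarith)

end Matrix

theorem rk_doubly_noisy_additive_unsquared_general {m n : ℕ}
    (A E : Matrix (Fin m) (Fin n) ℝ)
    (xLS : EuclideanSpace ℝ (Fin n)) (ε : EuclideanSpace ℝ (Fin m))
    (σ : ℝ) (hσ : 0 < σ)
    (hσA : ∀ z ∈ rowSpace (A + E), σ * ‖z‖ ≤ ‖mulVecE (A + E) z‖)
    (x0 : EuclideanSpace ℝ (Fin n)) (hx0 : x0 - xLS ∈ rowSpace (A + E))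
    (k : ℕ) :
    ∑ is : Fin k → Fin m,
        (∏ j, ‖_root_.row (A + E) (is j)‖ ^ 2 / frobSq (A + E)) *
          ‖kaczmarzIter (A + E) (fun j => mulVecE A xLS j + ε j) is x0 - xLS‖
      ≤ Real.sqrt ((1 - σ ^ 2 / frobSq (A + E)) ^ k) * ‖x0 - xLS‖
        + ‖mulVecE E xLS - ε‖ / σ := by
  set c : Fin m → ℝ := fun j => mulVecE A xLS j + ε j
  rcases (frobSq_nonneg (A + E)).eq_or_lt with hF | hF
  · obtain rfl : x0 = xLS :=
      sub_eq_zero.mp (by simpa [rowSpace_eq_bot_of_frobSq_eq_zero hF.symm] using hx0)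
    simp only [kaczmarzIter_eq_self_of_frobSq_eq_zero hF.symm, sub_self, norm_zero, mul_zero,
      Finset.sum_const_zero]
    positivity
  · have hα : 0 ≤ 1 - σ ^ 2 / frobSq (A + E) :=
      sub_nonneg.mpr (sq_div_frobSq_le_one hF hσ.le hσA)
    have hres : mulVecE (A + E) xLS - WithLp.toLp 2 c = mulVecE E xLS - ε := by
      ext j
      simp [c, mulVecE, map_add]
    have hsq := sum_prod_weight_mul_norm_kaczmarzIter_sub_sq_le hF hσ hσA c hx0 k
    rw [hres] at hsq
    refine sum_mul_le_add_of_sum_mul_sq_le (fun is _ => by positivity)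
      (sum_prod_eq_one_of_sum_eq_one (sum_norm_row_sq_div_frobSq hF.ne') k) (by positivity)
      (by positivity) ?_
    rwa [mul_pow, Real.sq_sqrt (pow_nonneg hα k), div_pow]

/-- Unsquared form of the main theorem: randomized Kaczmarz on a doubly-noisy
system with additive noise. The left-hand side is the expectation
`E‖x_k - x_LS‖` over the i.i.d. row choices `(i₁, …, i_k)` sampled with
probabilities `pᵢ = ‖ãᵢ‖²/‖Ã‖_F²`; the rate is `(1 - σ²/‖Ã‖_F²)^{k/2}`. -/
theorem rk_doubly_noisy_additive_unsquared {m n : ℕ}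
    (A E : Matrix (Fin m) (Fin n) ℝ)
    (hrow : ∀ i, _root_.row (A + E) i ≠ 0)
    (xLS : EuclideanSpace ℝ (Fin n)) (ε : EuclideanSpace ℝ (Fin m))
    (σ : ℝ) (hσ : 0 < σ)
    (hσA : ∀ z ∈ rowSpace (A + E), σ * ‖z‖ ≤ ‖mulVecE (A + E) z‖)
    (x0 : EuclideanSpace ℝ (Fin n)) (hx0 : x0 - xLS ∈ rowSpace (A + E))
    (k : ℕ) :
    ∑ is : Fin k → Fin m,
        (∏ j, ‖_root_.row (A + E) (is j)‖ ^ 2 / frobSq (A + E)) *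
          ‖kaczmarzIter (A + E) (fun j => mulVecE A xLS j + ε j) is x0 - xLS‖
      ≤ Real.sqrt ((1 - σ ^ 2 / frobSq (A + E)) ^ k) * ‖x0 - xLS‖
        + ‖mulVecE E xLS - ε‖ / σ :=
  rk_doubly_noisy_additive_unsquared_general A E xLS ε σ hσ hσA x0 hx0 k
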